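/- Let m ≡ n ≡ 0 (mod 3), u ≡ 2 or 4 (mod 6), v = 2m + 2n + u, c < binom(u,3), and suppose (u,c) satisfies condition (C2) with associated pair (λ,δ). Suppose that: (i) (V,𝒜) is a simple NGDD(2,3,v) of type 2^{(m,n)}u^1 with size-2 groups G_1,…,G_{m+n} and the group U of size u; (ii) (V,𝓑) is a simple GDD_{λ−1}(2,3,v) of type 1^{2m+2n}u^1 with long group U; (iii) (U,𝓒) is an NWBTS(u;c); and the block families 𝒜, 𝓑, 𝓒 are pairwise disjoint. Then 𝓕 = 𝒜 ∪ 𝓑 ∪ 𝓒 is the block set of an NWBTS(v;|𝓕|), where 3|𝓕| = λ·binom(v,2) + m − n + δ. -/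

import Mathlib

/-!
In `𝓕 = 𝒜 ∪ 𝓑 ∪ 𝓒` a pair inside `U` is covered by `𝓒` alone; a short group `Gᵢ` is covered
`λ - 1` times by `𝓑` and twice (`i < m`) or never (`i ≥ m`) by `𝒜`; every other pair is covered
once by `𝒜` and `λ - 1` times by `𝓑`. So the defect graph of `𝓕` is that of `𝓒` together with the
perfect matching `{Gᵢ}` of `V \ U`, with `m` edges of excess and `n` of deficit. This preserves
the (C2) shape, shifts `ε` by `m - n`, and double counting pairs gives `|𝓕|`. Since `c < C(u,3)`,
some triple is missing from the 3-balanced `𝓒`, so `𝓒` is simple; being the union of three disjoint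
simple families, `𝓕` is simple and hence 3-balanced.
-/

namespace DataPlacement

open Finset

variable {α : Type*} [DecidableEq α]

/-- Number of blocks of the family `F` (with multiplicity) containing `T`. -/
def lamF (F : Multiset (Finset α)) (T : Finset α) : ℕ :=
  Multiset.card (F.filter fun B => T ⊆ B)

/-- Triple system with `b` blocks on a point set `X` of size `v`. -/
def IsTSOn (X : Finset α) (v b : ℕ) (F : Multiset (Finset α)) : Prop :=
  X.card = v ∧ Multiset.card F = b ∧ ∀ B ∈ F, B.card = 3 ∧ B ⊆ X

/-- `(l, e)` is the pair associated with `(v, b)`: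
`3b = l·v(v−1)/2 + e` with `−v/2 < e < v/2`. -/
def AssocPair (v b l : ℕ) (e : ℤ) : Prop :=
  6 * (b : ℤ) = (l : ℤ) * v * ((v : ℤ) - 1) + 2 * e ∧
    -(v : ℤ) < 2 * e ∧ 2 * e < (v : ℤ)

/-- Condition (C1). -/
def CondC1 (v b : ℕ) : Prop :=
  v % 3 = 2 ∧ ∃ l : ℕ, 0 < l ∧
    ((v % 6 = 5 ∧ (l % 3 = 1 ∨ l % 3 = 2)) ∨
     (v % 6 = 2 ∧ (l % 6 = 2 ∨ l % 6 = 4))) ∧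
    (b = l * v * (v - 1) / 6 ∨ b = (l * v * (v - 1) + 5) / 6)

/-- Condition (C2). -/
def CondC2 (v b : ℕ) : Prop :=
  v % 2 = 0 ∧ ∃ l : ℕ, 0 < l ∧ l % 2 = 1 ∧
    (l : ℤ) * v * ((v : ℤ) - 1) - v < 6 * (b : ℤ) ∧
    6 * (b : ℤ) < (l : ℤ) * v * ((v : ℤ) - 1) + v

/-- Pairs of points of `X` whose block count equals `l + i`. -/
def Dlev (X : Finset α) (F : Multiset (Finset α)) (l : ℕ) (i : ℤ) :
    Finset (Finset α) :=
  (X.powersetCard 2).filter fun p => (lamF F p : ℤ) = (l : ℤ) + i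

/-- Every pair of points of `X` lies in `l−1`, `l`, or `l+1` blocks. -/
def PairRangeOn (X : Finset α) (F : Multiset (Finset α)) (l : ℕ) : Prop :=
  ∀ p ∈ X.powersetCard 2,
    (l : ℤ) - 1 ≤ (lamF F p : ℤ) ∧ (lamF F p : ℤ) ≤ (l : ℤ) + 1

def IsTriangle (D : Finset (Finset α)) : Prop :=
  ∃ x y z : α, x ≠ y ∧ x ≠ z ∧ y ≠ z ∧
    D = {({x, y} : Finset α), {y, z}, {x, z}}

def IsFourCycle (D : Finset (Finset α)) : Prop :=
  ∃ x y z w : α, x ≠ y ∧ x ≠ z ∧ x ≠ w ∧ y ≠ z ∧ y ≠ w ∧ z ≠ w ∧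
    D = {({x, y} : Finset α), {y, z}, {z, w}, {x, w}}

/-- `D` is a perfect matching on the point set `X`. -/
def IsPerfectMatchingOn (X : Finset α) (D : Finset (Finset α)) : Prop :=
  (∀ p ∈ D, p.card = 2 ∧ p ⊆ X) ∧ ∀ x ∈ X, ∃! p, p ∈ D ∧ x ∈ p

/-- Defect-graph shape required for nearly 2-balance under (C1). -/
def C1ShapeOn (X : Finset α) (F : Multiset (Finset α)) (l : ℕ) (e : ℤ) : Prop :=
  (e = 1 ∧ IsTriangle (Dlev X F l 1 ∪ Dlev X F l (-1)) ∧
     (Dlev X F l 1).card = 2 ∧ (Dlev X F l (-1)).card = 1) ∨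
  (e = -1 ∧ IsTriangle (Dlev X F l 1 ∪ Dlev X F l (-1)) ∧
     (Dlev X F l 1).card = 1 ∧ (Dlev X F l (-1)).card = 2) ∨
  (e = 2 ∧ IsFourCycle (Dlev X F l 1 ∪ Dlev X F l (-1)) ∧
     (Dlev X F l 1).card = 3 ∧ (Dlev X F l (-1)).card = 1) ∨
  (e = -2 ∧ IsFourCycle (Dlev X F l 1 ∪ Dlev X F l (-1)) ∧
     (Dlev X F l 1).card = 1 ∧ (Dlev X F l (-1)).card = 3)

/-- Defect-graph shape required for nearly 2-balance under (C2)
(here `v = X.card`). -/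
def C2ShapeOn (X : Finset α) (v : ℕ) (F : Multiset (Finset α)) (l : ℕ) (e : ℤ) : Prop :=
  (((v : ℤ) - 2 * e) % 4 = 0 ∧
    IsPerfectMatchingOn X (Dlev X F l 1 ∪ Dlev X F l (-1)) ∧
    4 * ((Dlev X F l 1).card : ℤ) = (v : ℤ) + 2 * e ∧
    4 * ((Dlev X F l (-1)).card : ℤ) = (v : ℤ) - 2 * e) ∨
  (((v : ℤ) - 2 * e) % 4 ≠ 0 ∧
    ∃ (c a₂ a₃ a₄ : α) (star : Finset (Finset α)),
      c ∈ X ∧ a₂ ∈ X ∧ a₃ ∈ X ∧ a₄ ∈ X ∧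
      c ≠ a₂ ∧ c ≠ a₃ ∧ c ≠ a₄ ∧ a₂ ≠ a₃ ∧ a₂ ≠ a₄ ∧ a₃ ≠ a₄ ∧
      star = {({c, a₂} : Finset α), {c, a₃}, {c, a₄}} ∧
      star ⊆ Dlev X F l 1 ∪ Dlev X F l (-1) ∧
      IsPerfectMatchingOn (X \ {c, a₂, a₃, a₄})
        ((Dlev X F l 1 ∪ Dlev X F l (-1)) \ star) ∧
      (((star ∩ Dlev X F l 1).card = 2 ∧ (star ∩ Dlev X F l (-1)).card = 1 ∧
          4 * (((Dlev X F l 1) \ star).card : ℤ) = (v : ℤ) - 6 + 2 * e ∧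
          4 * (((Dlev X F l (-1)) \ star).card : ℤ) = (v : ℤ) - 2 - 2 * e) ∨
        ((star ∩ Dlev X F l 1).card = 1 ∧ (star ∩ Dlev X F l (-1)).card = 2 ∧
          4 * (((Dlev X F l 1) \ star).card : ℤ) = (v : ℤ) - 2 + 2 * e ∧
          4 * (((Dlev X F l (-1)) \ star).card : ℤ) = (v : ℤ) - 6 - 2 * e)))

/-- `F` is 3-balanced on `X`: the multiplicities of any two triples of `X`
differ by at most one. -/
def ThreeBalancedOn (X : Finset α) (F : Multiset (Finset α)) : Prop :=
  ∀ T₁ ∈ X.powersetCard 3, ∀ T₂ ∈ X.powersetCard 3, F.count T₁ ≤ F.count T₂ + 1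

/-- Nearly well-balanced triple system NWBTS(v;b) on the point set `X`. -/
def IsNWBTSOn (X : Finset α) (v b : ℕ) (F : Multiset (Finset α)) : Prop :=
  IsTSOn X v b F ∧ ThreeBalancedOn X F ∧
  ∃ (l : ℕ) (e : ℤ), 0 < l ∧ AssocPair v b l e ∧ PairRangeOn X F l ∧
    ((CondC1 v b ∧ C1ShapeOn X F l e) ∨ (CondC2 v b ∧ C2ShapeOn X v F l e))

/-- `B` is an S_mu(2,3,·) design on the point set `X`. -/
def IsSDesignOn (X : Finset α) (mu : ℕ) (B : Multiset (Finset α)) : Prop :=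
  (∀ A ∈ B, A.card = 3 ∧ A ⊆ X) ∧ ∀ p ∈ X.powersetCard 2, lamF B p = mu

/-- `B` is a GDD_mu(2,3,·) of type `1^{·}u^1` on `X` with long group `U`. -/
def IsGDD1u (X : Finset α) (mu u : ℕ) (U : Finset α) (B : Multiset (Finset α)) : Prop :=
  U ⊆ X ∧ U.card = u ∧
  (∀ A ∈ B, A.card = 3 ∧ A ⊆ X ∧ (A ∩ U).card ≤ 1) ∧
  ∀ p ∈ X.powersetCard 2, ¬ p ⊆ U → lamF B p = mu

/-- `B` is a GDD_mu(2,3,·) with group family `G`. -/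
def IsGDDgroups (mu : ℕ) {n : ℕ} (G : Fin n → Finset α) (B : Multiset (Finset α)) : Prop :=
  (∀ A ∈ B, A.card = 3 ∧ A ⊆ Finset.univ.biUnion G ∧ ∀ i, (A ∩ G i).card ≤ 1) ∧
  ∀ x y : α, x ≠ y → (∃ i j, i ≠ j ∧ x ∈ G i ∧ y ∈ G j) → lamF B {x, y} = mu

/-- Nearly group divisible design NGDD(2,3,·) of type `2^{(m,n)}u^1` on `X`. -/
def IsNGDD (X : Finset α) (m n u : ℕ) (G : Fin (m + n) → Finset α) (U : Finset α)
    (B : Multiset (Finset α)) : Prop :=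
  (∀ i, (G i).card = 2 ∧ G i ⊆ X) ∧ U.card = u ∧ U ⊆ X ∧
  (∀ i j, i ≠ j → Disjoint (G i) (G j)) ∧ (∀ i, Disjoint (G i) U) ∧
  U ∪ Finset.univ.biUnion G = X ∧
  (∀ A ∈ B, A.card = 3 ∧ A ⊆ X) ∧
  (∀ i : Fin (m + n), (i : ℕ) < m → lamF B (G i) = 2) ∧
  (∀ i : Fin (m + n), m ≤ (i : ℕ) → lamF B (G i) = 0) ∧
  (∀ p ∈ U.powersetCard 2, lamF B p = 0) ∧
  (∀ p ∈ X.powersetCard 2, (∀ i, ¬ p ⊆ G i) → ¬ p ⊆ U → lamF B p = 1)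

/-- Candelabra system CS(g^n : s) on `X` with stem `S` and groups `G`. -/
def IsCS (X : Finset α) (g n s : ℕ) (S : Finset α) (G : Fin n → Finset α)
    (A : Multiset (Finset α)) : Prop :=
  S.card = s ∧ S ⊆ X ∧ (∀ i, (G i).card = g ∧ G i ⊆ X) ∧
  (∀ i j, i ≠ j → Disjoint (G i) (G j)) ∧ (∀ i, Disjoint (G i) S) ∧
  S ∪ Finset.univ.biUnion G = X ∧
  (∀ B ∈ A, B.card = 3 ∧ B ⊆ X) ∧
  (∀ T ∈ X.powersetCard 3, (∀ i, ¬ T ⊆ S ∪ G i) → lamF A T = 1) ∧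
  (∀ T ∈ X.powersetCard 3, (∃ i, T ⊆ S ∪ G i) → lamF A T = 0)

/-- Partitionable candelabra system PCS(g^n : s). -/
def IsPCS (X : Finset α) (g n s : ℕ) (S : Finset α) (G : Fin n → Finset α)
    (A : Multiset (Finset α)) : Prop :=
  IsCS X g n s S G A ∧
  ∃ (Ax : α → Multiset (Finset α)) (Ai : Fin (s - 2) → Multiset (Finset α)),
    A = (∑ p ∈ X \ S, Ax p) + ∑ i, Ai i ∧
    (∀ i : Fin n, ∀ p ∈ G i, IsGDD1u X 1 (g + s) (G i ∪ S) (Ax p)) ∧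
    (∀ j, IsGDDgroups 1 G (Ai j))

/-- g-PCS_2((2ag)^n : s). -/
def IsGPCS2 (X : Finset α) (a g n s : ℕ) (S : Finset α) (G : Fin n → Finset α)
    (A : Multiset (Finset α)) : Prop :=
  IsCS X (2 * a * g) n s S G A ∧
  ∃ (P : Fin (g * n) → Multiset (Finset α)) (grp : Fin (g * n) → Fin n),
    (∑ i, P i) ≤ A ∧
    (∀ j : Fin n, (Finset.univ.filter fun i => grp i = j).card = g) ∧
    (∀ i, IsGDD1u X 2 (2 * a * g + s) (G (grp i) ∪ S) (P i))

/-- g-PCS_2^r((2ag)^n : s). -/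
def IsGPCS2r (X : Finset α) (a g n s r : ℕ) (S : Finset α) (G : Fin n → Finset α)
    (A : Multiset (Finset α)) : Prop :=
  IsCS X (2 * a * g) n s S G A ∧
  ∃ (P : Fin (g * n) → Multiset (Finset α)) (grp : Fin (g * n) → Fin n),
    (∑ i, P i) ≤ A ∧
    (∀ j : Fin n, (Finset.univ.filter fun i => grp i = j).card = g) ∧
    (∀ i, IsGDD1u X 2 (2 * a * g + s) (G (grp i) ∪ S) (P i)) ∧
    ∃ (i : Fin (g * n)) (N : Multiset (Finset α))
      (Gs : Fin (r + (a * g * (n - 1) - r)) → Finset α),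
      N ≤ P i ∧ IsNGDD X r (a * g * (n - 1) - r) (2 * a * g + s) Gs (G (grp i) ∪ S) N

/-- GDD(3,3,·) of type `g^k` on `X` with groups `H`. -/
def IsGDD3On (X : Finset α) (g : ℕ) {k : ℕ} (H : Fin k → Finset α)
    (A : Multiset (Finset α)) : Prop :=
  (∀ i, (H i).card = g ∧ H i ⊆ X) ∧ (∀ i j, i ≠ j → Disjoint (H i) (H j)) ∧
  Finset.univ.biUnion H = X ∧
  (∀ B ∈ A, B.card = 3 ∧ B ⊆ X ∧ ∀ i, (B ∩ H i).card ≤ 1) ∧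
  (∀ T ∈ X.powersetCard 3, (∀ i, (T ∩ H i).card ≤ 1) → lamF A T = 1)

/-- `B` is a GDD_mu(2,3,·) on the points not in the omitted group `H o`,
with group set `{H i : i ≠ o}`. -/
def IsGDDOmit (mu : ℕ) {k : ℕ} (H : Fin k → Finset α) (o : Fin k)
    (B : Multiset (Finset α)) : Prop :=
  (∀ A ∈ B, A.card = 3 ∧ Disjoint A (H o) ∧ ∀ i, (A ∩ H i).card ≤ 1) ∧
  ∀ x y : α, x ≠ y →
    (∃ i j, i ≠ j ∧ i ≠ o ∧ j ≠ o ∧ x ∈ H i ∧ y ∈ H j) → lamF B {x, y} = mu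

/-- PGDD_2((2g)^{n+1}). -/
def IsPGDD2 (g n : ℕ) (H : Fin (n + 1) → Finset (Fin (2 * g * (n + 1))))
    (A : Multiset (Finset (Fin (2 * g * (n + 1))))) : Prop :=
  IsGDD3On Finset.univ (2 * g) H A ∧
  ∃ (i0 : Fin (n + 1))
    (P : Fin (g * n + 2 * g) → Multiset (Finset (Fin (2 * g * (n + 1)))))
    (f : Fin (g * n + 2 * g) → Fin (n + 1)),
    A = ∑ i, P i ∧
    (∀ j, j ≠ i0 → (Finset.univ.filter fun i => f i = j).card = g) ∧
    (∀ i, f i ≠ i0 → IsGDDOmit 2 H (f i) (P i)) ∧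
    (∀ i, f i = i0 → IsGDDOmit 1 H i0 (P i))

/-- 1-FG(3,(K1,KT),n) of type 1^n. -/
def Is1FG (n : ℕ) (K1 KT : Set ℕ) (A1 AT : Multiset (Finset (Fin n))) : Prop :=
  (∀ B ∈ A1, B.card ∈ K1) ∧ (∀ B ∈ AT, B.card ∈ KT) ∧
  (∀ p ∈ (Finset.univ : Finset (Fin n)).powersetCard 2, lamF A1 p = 1) ∧
  (∀ T ∈ (Finset.univ : Finset (Fin n)).powersetCard 3, lamF (A1 + AT) T = 1)

/-- PICS_2^r((2g)^3 : 0). -/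
def IsPICS2 (g r : ℕ) (G : Fin 3 → Finset (Fin (6 * g)))
    (A : Multiset (Finset (Fin (6 * g)))) : Prop :=
  IsCS Finset.univ (2 * g) 3 0 (∅ : Finset (Fin (6 * g))) G A ∧
  ∃ P : Fin (4 * g - 2) → Multiset (Finset (Fin (6 * g))),
    A = ∑ i, P i ∧
    (∀ i : Fin (4 * g - 2), (i : ℕ) < 2 * g → IsSDesignOn Finset.univ 2 (P i)) ∧
    (∃ i : Fin (4 * g - 2), (i : ℕ) < 2 * g ∧
      ∃ (N : Multiset (Finset (Fin (6 * g))))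
        (Gs : Fin (r + (3 * g - r)) → Finset (Fin (6 * g))),
        N ≤ P i ∧ IsNGDD Finset.univ r (3 * g - r) 0 Gs ∅ N) ∧
    (∀ i : Fin (4 * g - 2), 2 * g ≤ (i : ℕ) → IsGDDgroups 1 G (P i))

/-- Number of ordered pairs of blocks of `F` whose intersection has exactly
`j` points. -/
def interCount (F : Multiset (Finset α)) (j : ℕ) : ℕ :=
  Multiset.card
    ((F.bind fun A => F.map fun B => (A, B)).filter fun p => (p.1 ∩ p.2).card = j)

/-- The polynomial `P(F, x) = Σ_{j=0}^{3} v_j x^j`. -/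
noncomputable def Pval (F : Multiset (Finset α)) (x : ℝ) : ℝ :=
  ∑ j ∈ Finset.range 4, (interCount F j : ℝ) * x ^ j

/-- Optimal data placement for triple replication. -/
def IsOptimalDP (v b : ℕ) (F : Multiset (Finset (Fin v))) : Prop :=
  IsTSOn Finset.univ v b F ∧
  ∀ F' : Multiset (Finset (Fin v)), IsTSOn Finset.univ v b F' →
    ∀ x : ℝ, 1 ≤ x → Pval F x ≤ Pval F' x

lemma lamF_add (F G : Multiset (Finset α)) (p : Finset α) :
    lamF (F + G) p = lamF F p + lamF G p := by
  simp [lamF, Multiset.filter_add]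

lemma lamF_eq_zero_of_forall_not_subset {F : Multiset (Finset α)} {p : Finset α}
    (h : ∀ B ∈ F, ¬ p ⊆ B) : lamF F p = 0 := by
  simpa [lamF, Multiset.filter_eq_nil] using h

lemma powersetCard_filter_subset {X B : Finset α} (k : ℕ) (hB : B ⊆ X) :
    (X.powersetCard k).filter (· ⊆ B) = B.powersetCard k := by
  ext p
  simp only [mem_filter, mem_powersetCard]
  exact ⟨fun ⟨⟨_, hp⟩, hpB⟩ => ⟨hpB, hp⟩, fun ⟨hpB, hp⟩ => ⟨⟨hpB.trans hB, hp⟩, hpB⟩⟩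

lemma sum_lamF_powersetCard_two {X : Finset α} {F : Multiset (Finset α)}
    (hF : ∀ B ∈ F, B.card = 3 ∧ B ⊆ X) :
    ∑ p ∈ X.powersetCard 2, lamF F p = 3 * Multiset.card F := by
  induction F using Multiset.induction with
  | empty => simp [lamF]
  | cons B F ih =>
    have hB := hF B (Multiset.mem_cons_self B F)
    have hsplit (p : Finset α) : lamF (B ::ₘ F) p = (if p ⊆ B then 1 else 0) + lamF F p := by
      rw [← Multiset.singleton_add, lamF_add]
      simp [lamF, Multiset.filter_singleton, apply_ite Multiset.card]
    rw [sum_congr rfl fun p _ => hsplit p, sum_add_distrib, sum_boole,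
      ih fun A hA => hF A (Multiset.mem_cons_of_mem hA), Nat.cast_id,
      powersetCard_filter_subset 2 hB.2, card_powersetCard, hB.1, Multiset.card_cons,
      show Nat.choose 3 2 = 3 from rfl]
    ring

lemma two_mul_choose_two (k : ℕ) : 2 * (k.choose 2 : ℤ) = k * ((k : ℤ) - 1) := by
  have h : ((2 * (k.choose 2 : ℤ) : ℤ) : ℚ) = ((k * ((k : ℤ) - 1) : ℤ) : ℚ) := by
    push_cast
    rw [Nat.cast_choose_two]
    ring
  exact_mod_cast h

lemma AssocPair.unique {v b l₁ l₂ : ℕ} {e₁ e₂ : ℤ} (hv : 3 ≤ v)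
    (h₁ : AssocPair v b l₁ e₁) (h₂ : AssocPair v b l₂ e₂) : l₁ = l₂ ∧ e₁ = e₂ := by
  obtain ⟨h₁, h₁l, h₁r⟩ := h₁
  obtain ⟨h₂, h₂l, h₂r⟩ := h₂
  have hv' : (3 : ℤ) ≤ v := by exact_mod_cast hv
  have hdiff : ((l₁ : ℤ) - l₂) * (v * (v - 1)) = 2 * e₂ - 2 * e₁ := by linear_combination h₂ - h₁
  -- a nonzero multiple of `v(v-1) ≥ 2v` cannot lie strictly between `-2v` and `2v`
  have hvv : 2 * (v : ℤ) ≤ v * (v - 1) := by nlinarith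
  have hl : (l₁ : ℤ) = l₂ := by
    rcases lt_trichotomy (l₁ : ℤ) l₂ with h | h | h
    · nlinarith [mul_le_mul_of_nonneg_right (show (1 : ℤ) ≤ l₂ - l₁ by omega)
        (show (0 : ℤ) ≤ v * (v - 1) by nlinarith)]
    · exact h
    · nlinarith [mul_le_mul_of_nonneg_right (show (1 : ℤ) ≤ l₁ - l₂ by omega)
        (show (0 : ℤ) ≤ v * (v - 1) by nlinarith)]
  have hl' : l₁ = l₂ := by exact_mod_cast hl
  subst hl'
  exact ⟨rfl, by linarith⟩

lemma assocPair_of_even {v b l : ℕ} (hv : v % 2 = 0)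
    (hlo : (l : ℤ) * v * ((v : ℤ) - 1) - v < 6 * (b : ℤ))
    (hhi : 6 * (b : ℤ) < (l : ℤ) * v * ((v : ℤ) - 1) + v) :
    ∃ e, AssocPair v b l e := by
  obtain ⟨k, rfl⟩ : 2 ∣ v := Nat.dvd_of_mod_eq_zero hv
  refine ⟨3 * b - l * k * (2 * k - 1), ?_, ?_, ?_⟩ <;> push_cast at * <;> linarith

lemma CondC2.exists_assocPair {v b : ℕ} (h : CondC2 v b) :
    ∃ l e, 0 < l ∧ l % 2 = 1 ∧ AssocPair v b l e := by
  obtain ⟨hv, l, hl, hodd, hlo, hhi⟩ := h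
  obtain ⟨e, he⟩ := assocPair_of_even hv hlo hhi
  exact ⟨l, e, hl, hodd, he⟩

lemma AssocPair.condC2 {v b l : ℕ} {e : ℤ} (h : AssocPair v b l e) (hv : v % 2 = 0)
    (hl : l % 2 = 1) : CondC2 v b := by
  obtain ⟨h, hlo, hhi⟩ := h
  exact ⟨hv, l, by omega, hl, by linarith, by linarith⟩

/-- Even orders satisfying (C1) have an even `λ`, those satisfying (C2) an odd one. -/
lemma CondC1.not_condC2 {v b : ℕ} (hv : 3 ≤ v) (h₁ : CondC1 v b) : ¬ CondC2 v b := by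
  intro h₂
  obtain ⟨l₂, e₂, -, hodd, hassoc₂⟩ := h₂.exists_assocPair
  obtain ⟨-, l₁, -, hcase, hb⟩ := h₁
  have hv6 : v % 6 = 2 := by have := h₂.1; omega
  have heven : l₁ % 2 = 0 := by omega
  have hb' : l₁ * v * (v - 1) ≤ 6 * b + 5 ∧ 6 * b ≤ l₁ * v * (v - 1) + 5 := by
    generalize l₁ * v * (v - 1) = x at hb
    omega
  have hbZ : (l₁ : ℤ) * v * ((v : ℤ) - 1) ≤ 6 * b + 5 ∧
      6 * (b : ℤ) ≤ l₁ * v * ((v : ℤ) - 1) + 5 := by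
    have h1 : 1 ≤ v := by omega
    zify [h1] at hb'
    exact hb'
  obtain ⟨e₁, hassoc₁⟩ := assocPair_of_even (b := b) (l := l₁) h₂.1 (by omega) (by omega)
  have := (AssocPair.unique hv hassoc₁ hassoc₂).1
  omega

lemma AssocPair.of_three_mul_sub_eq {u c v b l m n : ℕ} {d : ℤ} (h : AssocPair u c l d)
    (hv : v = 2 * m + 2 * n + u)
    (hb : 3 * (b : ℤ) - l * v.choose 2 = 3 * c - l * u.choose 2 + m - n) :
    3 * (b : ℤ) = l * v.choose 2 + m - n + d ∧ AssocPair v b l (m - n + d) := by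
  obtain ⟨h, hlo, hhi⟩ := h
  have h3c : 2 * (3 * (c : ℤ)) = 2 * (l * u.choose 2 + d) := by
    linear_combination h - (l : ℤ) * two_mul_choose_two u
  have h3b : 3 * (b : ℤ) = l * v.choose 2 + m - n + d := by linarith
  refine ⟨h3b, by linear_combination 2 * h3b + (l : ℤ) * two_mul_choose_two v, ?_, ?_⟩
  all_goals (subst hv; push_cast; omega)

lemma threeBalancedOn_of_nodup {X : Finset α} {F : Multiset (Finset α)} (h : F.Nodup) :
    ThreeBalancedOn X F := by
  intro T₁ _ T₂ _
  have := Multiset.nodup_iff_count_le_one.mp h T₁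
  omega

/-- Some triple of `X` is not a block, so 3-balance bounds every multiplicity by `1`. -/
lemma ThreeBalancedOn.nodup {X : Finset α} {F : Multiset (Finset α)} (h : ThreeBalancedOn X F)
    (hF : ∀ B ∈ F, B.card = 3 ∧ B ⊆ X) (hlt : Multiset.card F < X.card.choose 3) : F.Nodup := by
  obtain ⟨T₀, hT₀, hT₀F⟩ : ∃ T₀ ∈ X.powersetCard 3, T₀ ∉ F := by
    by_contra! hall
    have := Multiset.card_le_card
      ((Multiset.le_iff_subset (X.powersetCard 3).nodup).2 hall)
    rw [← Finset.card_def, card_powersetCard] at this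
    omega
  refine Multiset.nodup_iff_count_le_one.mpr fun T => ?_
  by_cases hT : T ∈ F
  · have := h T (mem_powersetCard.mpr ⟨(hF T hT).2, (hF T hT).1⟩) T₀ hT₀
    rwa [Multiset.count_eq_zero_of_notMem hT₀F] at this
  · rw [Multiset.count_eq_zero_of_notMem hT]
    exact zero_le_one

lemma sum_lamF_eq_of_pairRangeOn {X : Finset α} {F : Multiset (Finset α)} {l : ℕ}
    (h : PairRangeOn X F l) :
    ∑ p ∈ X.powersetCard 2, (lamF F p : ℤ) =
      l * X.card.choose 2 + (Dlev X F l 1).card - (Dlev X F l (-1)).card := by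
  have hterm : ∀ p ∈ X.powersetCard 2, (lamF F p : ℤ) =
      l + ((if (lamF F p : ℤ) = l + 1 then 1 else 0) -
        if (lamF F p : ℤ) = l + -1 then 1 else 0) := by
    intro p hp
    have := h p hp
    split_ifs <;> omega
  rw [sum_congr rfl hterm, sum_add_distrib, sum_sub_distrib, sum_boole, sum_boole, sum_const,
    card_powersetCard, nsmul_eq_mul, Dlev, Dlev]
  ring

lemma IsPerfectMatchingOn.union {X Y : Finset α} {M N : Finset (Finset α)}
    (hM : IsPerfectMatchingOn X M) (hN : IsPerfectMatchingOn Y N) (hXY : Disjoint X Y) :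
    IsPerfectMatchingOn (X ∪ Y) (M ∪ N) := by
  refine ⟨fun p hp => ?_, fun x hx => ?_⟩
  · rcases mem_union.mp hp with hp | hp
    · exact ⟨(hM.1 p hp).1, (hM.1 p hp).2.trans subset_union_left⟩
    · exact ⟨(hN.1 p hp).1, (hN.1 p hp).2.trans subset_union_right⟩
  rcases mem_union.mp hx with hx | hx
  · obtain ⟨p, hp, huniq⟩ := hM.2 x hx
    refine ⟨p, ⟨mem_union_left _ hp.1, hp.2⟩, fun q ⟨hq, hxq⟩ => ?_⟩
    rcases mem_union.mp hq with hq | hq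
    · exact huniq q ⟨hq, hxq⟩
    · exact absurd ((hN.1 q hq).2 hxq) (disjoint_left.mp hXY hx)
  · obtain ⟨p, hp, huniq⟩ := hN.2 x hx
    refine ⟨p, ⟨mem_union_right _ hp.1, hp.2⟩, fun q ⟨hq, hxq⟩ => ?_⟩
    rcases mem_union.mp hq with hq | hq
    · exact absurd ((hM.1 q hq).2 hxq) (disjoint_right.mp hXY hx)
    · exact huniq q ⟨hq, hxq⟩

lemma isPerfectMatchingOn_biUnion_image {ι : Type*} [Fintype ι]
    {G : ι → Finset α} (hcard : ∀ i, (G i).card = 2)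
    (hdisj : ∀ i j, i ≠ j → Disjoint (G i) (G j)) :
    IsPerfectMatchingOn (univ.biUnion G) (univ.image G) := by
  refine ⟨?_, fun x hx => ?_⟩
  · simp only [mem_image, mem_univ, true_and, forall_exists_index, forall_apply_eq_imp_iff]
    exact fun i => ⟨hcard i, subset_biUnion_of_mem G (mem_univ i)⟩
  obtain ⟨i, -, hxi⟩ := mem_biUnion.mp hx
  refine ⟨G i, ⟨mem_image_of_mem G (mem_univ i), hxi⟩, ?_⟩
  rintro _ ⟨hq, hxq⟩
  obtain ⟨j, -, rfl⟩ := mem_image.mp hq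
  by_contra hji
  exact disjoint_left.mp (hdisj j i fun h => hji (h ▸ rfl)) hxq hxi

lemma IsPerfectMatchingOn.disjoint_powersetCard {U W : Finset α} {E : Finset (Finset α)}
    (hE : IsPerfectMatchingOn (W \ U) E) : Disjoint (U.powersetCard 2) E := by
  refine disjoint_left.mpr fun p hpU hpE => ?_
  obtain ⟨x, hx⟩ := card_pos.mp (by rw [(hE.1 p hpE).1]; omega)
  exact (mem_sdiff.mp ((hE.1 p hpE).2 hx)).2 ((mem_powersetCard.mp hpU).1 hx)

section DefectExtension

variable {U W : Finset α} {F C : Multiset (Finset α)} {l : ℕ} {j : ℤ}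
  {E E' E₁ E₂ S : Finset (Finset α)}

lemma IsPerfectMatchingOn.extend {M : Finset (Finset α)} {T : Finset α}
    (hM : IsPerfectMatchingOn (U \ T) M) (hUW : U ⊆ W) (hTU : T ⊆ U)
    (hE : IsPerfectMatchingOn (W \ U) E) :
    IsPerfectMatchingOn (W \ T) (M ∪ E) := by
  have := hM.union hE (disjoint_sdiff.mono_left sdiff_subset)
  rwa [union_comm (U \ T), sdiff_union_sdiff_cancel hUW hTU] at this

lemma dlev_subset_powersetCard (X : Finset α) (F : Multiset (Finset α)) (l : ℕ) (j : ℤ) :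
    Dlev X F l j ⊆ X.powersetCard 2 :=
  filter_subset _ _

lemma inter_dlev_eq (hE : IsPerfectMatchingOn (W \ U) E) (hE' : E' ⊆ E)
    (hD : Dlev W F l j = Dlev U C l j ∪ E') (hS : S ⊆ U.powersetCard 2) :
    S ∩ Dlev W F l j = S ∩ Dlev U C l j := by
  rw [hD, inter_union_distrib_left,
    disjoint_iff_inter_eq_empty.mp (hE.disjoint_powersetCard.mono hS hE'), union_empty]

lemma card_dlev_sdiff_eq_add (hE : IsPerfectMatchingOn (W \ U) E) (hE' : E' ⊆ E)
    (hD : Dlev W F l j = Dlev U C l j ∪ E') (hS : S ⊆ U.powersetCard 2) :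
    (Dlev W F l j \ S).card = (Dlev U C l j \ S).card + E'.card := by
  rw [hD, union_sdiff_distrib,
    sdiff_eq_self_of_disjoint (hE.disjoint_powersetCard.mono hS hE').symm,
    card_union_of_disjoint (hE.disjoint_powersetCard.mono
      (sdiff_subset.trans (dlev_subset_powersetCard U C l j)) hE')]

lemma card_dlev_eq_add (hE : IsPerfectMatchingOn (W \ U) E) (hE' : E' ⊆ E)
    (hD : Dlev W F l j = Dlev U C l j ∪ E') :
    (Dlev W F l j).card = (Dlev U C l j).card + E'.card := by
  simpa using card_dlev_sdiff_eq_add hE hE' hD (empty_subset _)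

lemma C2ShapeOn.extend {m n u : ℕ} {d : ℤ} (hUW : U ⊆ W)
    (hE : IsPerfectMatchingOn (W \ U) (E₁ ∪ E₂)) (hE₁ : E₁.card = m) (hE₂ : E₂.card = n)
    (hD₁ : Dlev W F l 1 = Dlev U C l 1 ∪ E₁) (hD₂ : Dlev W F l (-1) = Dlev U C l (-1) ∪ E₂)
    (hC : C2ShapeOn U u C l d) : C2ShapeOn W (2 * m + 2 * n + u) F l (m - n + d) := by
  have hunion : Dlev W F l 1 ∪ Dlev W F l (-1) =
      (Dlev U C l 1 ∪ Dlev U C l (-1)) ∪ (E₁ ∪ E₂) := by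
    rw [hD₁, hD₂, union_union_union_comm]
  have hcard₁ := card_dlev_eq_add hE subset_union_left hD₁
  have hcard₂ := card_dlev_eq_add hE subset_union_right hD₂
  rcases hC with ⟨hmod, hPM, h₁, h₂⟩ |
    ⟨hmod, c, a₂, a₃, a₄, star, hc, ha₂, ha₃, ha₄, hca₂, hca₃, hca₄, ha₂₃, ha₂₄, ha₃₄, hstar_eq,
      hstar, hPM, hcounts⟩
  · left
    refine ⟨by push_cast; omega, ?_, by omega, by omega⟩
    rw [hunion]
    have hPM' : IsPerfectMatchingOn (U \ ∅) (Dlev U C l 1 ∪ Dlev U C l (-1)) := by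
      rwa [sdiff_empty]
    simpa only [sdiff_empty] using hPM'.extend hUW (empty_subset U) hE
  right
  have hstarU : star ⊆ U.powersetCard 2 :=
    hstar.trans (union_subset (dlev_subset_powersetCard U C l 1)
      (dlev_subset_powersetCard U C l (-1)))
  refine ⟨by push_cast; omega, c, a₂, a₃, a₄, star, hUW hc, hUW ha₂, hUW ha₃, hUW ha₄,
    hca₂, hca₃, hca₄, ha₂₃, ha₂₄, ha₃₄, hstar_eq, ?_, ?_, ?_⟩
  · rw [hunion]
    exact hstar.trans subset_union_left
  · rw [hunion, union_sdiff_distrib,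
      sdiff_eq_self_of_disjoint (hE.disjoint_powersetCard.mono hstarU subset_rfl).symm]
    exact hPM.extend hUW (by simp [insert_subset_iff, hc, ha₂, ha₃, ha₄]) hE
  · have hsdiff₁ := card_dlev_sdiff_eq_add hE subset_union_left hD₁ hstarU
    have hsdiff₂ := card_dlev_sdiff_eq_add hE subset_union_right hD₂ hstarU
    rw [inter_dlev_eq hE subset_union_left hD₁ hstarU,
      inter_dlev_eq hE subset_union_right hD₂ hstarU]
    push_cast
    omega

/-- Double counting pairs: the excess `3b - λ·C(v,2)` is `|D₁| - |D₋₁|`. -/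
lemma three_mul_card_sub_eq {m n : ℕ} (hFW : ∀ B ∈ F, B.card = 3 ∧ B ⊆ W)
    (hCU : ∀ B ∈ C, B.card = 3 ∧ B ⊆ U) (hF : PairRangeOn W F l) (hC : PairRangeOn U C l)
    (hE : IsPerfectMatchingOn (W \ U) (E₁ ∪ E₂)) (hE₁ : E₁.card = m) (hE₂ : E₂.card = n)
    (hD₁ : Dlev W F l 1 = Dlev U C l 1 ∪ E₁) (hD₂ : Dlev W F l (-1) = Dlev U C l (-1) ∪ E₂) :
    3 * (Multiset.card F : ℤ) - l * W.card.choose 2 =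
      3 * (Multiset.card C : ℤ) - l * U.card.choose 2 + m - n := by
  have hsumF := sum_lamF_eq_of_pairRangeOn hF
  have hsumC := sum_lamF_eq_of_pairRangeOn hC
  rw [← Nat.cast_sum, sum_lamF_powersetCard_two hFW] at hsumF
  rw [← Nat.cast_sum, sum_lamF_powersetCard_two hCU] at hsumC
  rw [card_dlev_eq_add hE subset_union_left hD₁, card_dlev_eq_add hE subset_union_right hD₂,
    hE₁, hE₂] at hsumF
  push_cast at hsumF hsumC
  linarith

end DefectExtension

/-- `+1` on the groups `G₁, …, Gₘ` covered twice by an NGDD of type `2^(m,n) u^1`, `-1` on the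
`n` uncovered groups. -/
def groupSign (m : ℕ) {k : ℕ} (i : Fin k) : ℤ := if (i : ℕ) < m then 1 else -1

lemma card_filter_groupSign_eq_one (m n : ℕ) :
    (univ.filter fun i : Fin (m + n) => groupSign m i = 1).card = m := by
  simp [groupSign, Fin.card_filter_val_lt]

lemma card_filter_groupSign_eq_neg_one (m n : ℕ) :
    (univ.filter fun i : Fin (m + n) => groupSign m i = -1).card = n := by
  have h := card_filter_add_card_filter_not (s := (univ : Finset (Fin (m + n))))
    fun i => (i : ℕ) < m
  rw [card_univ, Fintype.card_fin, Fin.card_filter_val_lt] at h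
  rw [filter_congr fun i _ => show groupSign m i = -1 ↔ ¬ (i : ℕ) < m by simp [groupSign]]
  omega

namespace IsNGDD

variable {X U : Finset α} {m n u l : ℕ} {G : Fin (m + n) → Finset α}
  {A B C : Multiset (Finset α)}

lemma not_subset (hA : IsNGDD X m n u G U A) (i : Fin (m + n)) : ¬ G i ⊆ U := by
  intro h
  obtain ⟨x, hx⟩ := card_pos.mp (by rw [(hA.1 i).1]; omega)
  exact disjoint_left.mp (hA.2.2.2.2.1 i) hx (h hx)

lemma injective (hA : IsNGDD X m n u G U A) : Function.Injective G := fun i j hij => by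
  by_contra hne
  obtain ⟨x, hx⟩ := card_pos.mp (by rw [(hA.1 i).1]; omega)
  exact disjoint_left.mp (hA.2.2.2.1 i j hne) hx (hij ▸ hx)

lemma eq_of_subset (hA : IsNGDD X m n u G U A) {p : Finset α} (hp : p.card = 2)
    {i : Fin (m + n)} (h : p ⊆ G i) : p = G i :=
  eq_of_subset_of_card_le h (by rw [(hA.1 i).1, hp])

lemma isPerfectMatchingOn (hA : IsNGDD X m n u G U A) :
    IsPerfectMatchingOn (X \ U) (univ.image G) := by
  obtain ⟨hG, -, -, hdisj, hGU, hcover, -⟩ := hA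
  rw [← hcover, union_sdiff_left, sdiff_eq_self_of_disjoint
    ((disjoint_biUnion_left _ _ _).mpr fun i _ => hGU i)]
  exact isPerfectMatchingOn_biUnion_image (fun i => (hG i).1) hdisj

lemma forall_mem_add_add (hA : IsNGDD X m n u G U A) (hB : IsGDD1u X (l - 1) u U B)
    (hC : ∀ T ∈ C, T.card = 3 ∧ T ⊆ U) : ∀ T ∈ A + B + C, T.card = 3 ∧ T ⊆ X := by
  simp only [Multiset.mem_add]
  rintro T ((hT | hT) | hT)
  exacts [hA.2.2.2.2.2.2.1 T hT, ⟨(hB.2.2.1 T hT).1, (hB.2.2.1 T hT).2.1⟩,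
    ⟨(hC T hT).1, (hC T hT).2.trans hA.2.2.1⟩]

lemma lamF_of_mem_powersetCard (hA : IsNGDD X m n u G U A) (hB : IsGDD1u X (l - 1) u U B)
    {p : Finset α} (hp : p ∈ U.powersetCard 2) : lamF (A + B + C) p = lamF C p := by
  obtain ⟨-, -, -, -, -, -, -, -, -, hAU, -⟩ := hA
  obtain ⟨-, -, hBblocks, -⟩ := hB
  have hBp : lamF B p = 0 := lamF_eq_zero_of_forall_not_subset fun T hT hpT => by
    have := card_le_card (subset_inter hpT (mem_powersetCard.mp hp).1)
    have := (mem_powersetCard.mp hp).2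
    have := (hBblocks T hT).2.2
    omega
  rw [lamF_add, lamF_add, hAU p hp, hBp, zero_add, zero_add]

lemma lamF_group (hA : IsNGDD X m n u G U A) (hB : IsGDD1u X (l - 1) u U B)
    (hC : ∀ T ∈ C, T ⊆ U) (hl : 1 ≤ l) (i : Fin (m + n)) :
    (lamF (A + B + C) (G i) : ℤ) = l + groupSign m i := by
  have hBG : lamF B (G i) = l - 1 :=
    hB.2.2.2 _ (mem_powersetCard.mpr (hA.1 i).symm) (hA.not_subset i)
  have hCG : lamF C (G i) = 0 :=
    lamF_eq_zero_of_forall_not_subset fun T hT h => hA.not_subset i (h.trans (hC T hT))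
  obtain ⟨-, -, -, -, -, -, -, hdouble, hmissing, -⟩ := hA
  rw [lamF_add, lamF_add, hBG, hCG, groupSign]
  split_ifs with him
  · rw [hdouble i him]
    omega
  · rw [hmissing i (not_lt.mp him)]
    omega

lemma lamF_of_not_subset (hA : IsNGDD X m n u G U A) (hB : IsGDD1u X (l - 1) u U B)
    (hC : ∀ T ∈ C, T ⊆ U) (hl : 1 ≤ l) {p : Finset α} (hp : p ∈ X.powersetCard 2)
    (hpU : ¬ p ⊆ U) (hpG : ∀ i, ¬ p ⊆ G i) : lamF (A + B + C) p = l := by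
  have hCp : lamF C p = 0 :=
    lamF_eq_zero_of_forall_not_subset fun T hT h => hpU (h.trans (hC T hT))
  obtain ⟨-, -, -, -, -, -, -, -, -, -, hcross⟩ := hA
  rw [lamF_add, lamF_add, hcross p hp hpG hpU, hB.2.2.2 p hp hpU, hCp]
  omega
lemma pairRangeOn (hA : IsNGDD X m n u G U A) (hB : IsGDD1u X (l - 1) u U B)
    (hC : ∀ T ∈ C, T ⊆ U) (hl : 1 ≤ l) (hCl : PairRangeOn U C l) :
    PairRangeOn X (A + B + C) l := by
  intro p hp
  have hp2 := (mem_powersetCard.mp hp).2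
  by_cases hpU : p ⊆ U
  · have hpU' : p ∈ U.powersetCard 2 := mem_powersetCard.mpr ⟨hpU, hp2⟩
    rw [hA.lamF_of_mem_powersetCard hB hpU']
    exact hCl p hpU'
  by_cases hpG : ∃ i, p ⊆ G i
  · obtain ⟨i, hi⟩ := hpG
    rw [hA.eq_of_subset hp2 hi, hA.lamF_group hB hC hl i, groupSign]
    split_ifs <;> omega
  · rw [hA.lamF_of_not_subset hB hC hl hp hpU (not_exists.mp hpG)]
    omega

lemma dlev_eq_union (hA : IsNGDD X m n u G U A) (hB : IsGDD1u X (l - 1) u U B)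
    (hC : ∀ T ∈ C, T ⊆ U) (hl : 1 ≤ l) {j : ℤ} (hj : j ≠ 0) :
    Dlev X (A + B + C) l j =
      Dlev U C l j ∪ (univ.filter fun i => groupSign m i = j).image G := by
  have hUX : U ⊆ X := hA.2.2.1
  ext p
  simp only [Dlev, mem_union, mem_filter, mem_image, mem_univ, true_and]
  constructor
  · rintro ⟨hp, hlam⟩
    have hp2 := (mem_powersetCard.mp hp).2
    by_cases hpU : p ⊆ U
    · have hpU' : p ∈ U.powersetCard 2 := mem_powersetCard.mpr ⟨hpU, hp2⟩
      exact Or.inl ⟨hpU', by rwa [← hA.lamF_of_mem_powersetCard hB hpU']⟩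
    by_cases hpG : ∃ i, p ⊆ G i
    · obtain ⟨i, hi⟩ := hpG
      rw [hA.eq_of_subset hp2 hi, hA.lamF_group hB hC hl i] at hlam
      exact Or.inr ⟨i, by omega, (hA.eq_of_subset hp2 hi).symm⟩
    · rw [hA.lamF_of_not_subset hB hC hl hp hpU (not_exists.mp hpG)] at hlam
      omega
  · rintro (⟨hp, hlam⟩ | ⟨i, hi, rfl⟩)
    · obtain ⟨hpU, hp2⟩ := mem_powersetCard.mp hp
      exact ⟨mem_powersetCard.mpr ⟨hpU.trans hUX, hp2⟩,
        by rwa [hA.lamF_of_mem_powersetCard hB hp]⟩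
    · exact ⟨mem_powersetCard.mpr (hA.1 i).symm, by rw [hA.lamF_group hB hC hl i, hi]⟩

lemma exists_dlev_eq_union (hA : IsNGDD X m n u G U A) (hB : IsGDD1u X (l - 1) u U B)
    (hC : ∀ T ∈ C, T ⊆ U) (hl : 1 ≤ l) :
    ∃ E₁ E₂ : Finset (Finset α), IsPerfectMatchingOn (X \ U) (E₁ ∪ E₂) ∧
      E₁.card = m ∧ E₂.card = n ∧
      Dlev X (A + B + C) l 1 = Dlev U C l 1 ∪ E₁ ∧
      Dlev X (A + B + C) l (-1) = Dlev U C l (-1) ∪ E₂ := by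
  refine ⟨_, _, ?_, ?_, ?_, hA.dlev_eq_union hB hC hl one_ne_zero,
    hA.dlev_eq_union hB hC hl (by norm_num)⟩
  · rw [← image_union, ← filter_or, filter_true_of_mem fun i _ => by
      unfold groupSign; split_ifs <;> simp]
    exact hA.isPerfectMatchingOn
  · rw [card_image_of_injective _ hA.injective, card_filter_groupSign_eq_one]
  · rw [card_image_of_injective _ hA.injective, card_filter_groupSign_eq_neg_one]

end IsNGDD

theorem stmt_10_general (v m n u c l : ℕ) (d : ℤ)
    (hv : v = 2 * m + 2 * n + u)
    (hc : c < u.choose 3) (hC2 : CondC2 u c) (hassoc : AssocPair u c l d)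
    (U : Finset (Fin v)) (G : Fin (m + n) → Finset (Fin v))
    (A B C : Multiset (Finset (Fin v)))
    (hAsimple : A.Nodup) (hA : IsNGDD Finset.univ m n u G U A)
    (hBsimple : B.Nodup) (hB : IsGDD1u Finset.univ (l - 1) u U B)
    (hC : IsNWBTSOn U u c C)
    (hAB : Disjoint A B) (hAC : Disjoint A C)
    (hBC : Disjoint B C) :
    IsNWBTSOn Finset.univ v (Multiset.card (A + B + C)) (A + B + C) ∧
    3 * (Multiset.card (A + B + C) : ℤ) =
      (l : ℤ) * (v.choose 2 : ℤ) + m - n + d := by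
  obtain ⟨⟨hUcard, hCcard, hCblocks⟩, hCbal, lC, dC, -, hassocC, hCrange, hCshape⟩ := hC
  have hu : 3 ≤ u := by
    by_contra! h
    rw [Nat.choose_eq_zero_of_lt h] at hc
    omega
  obtain ⟨rfl, rfl⟩ := hassoc.unique hu hassocC
  obtain ⟨l₀, d₀, hl, hodd, hassoc₀⟩ := hC2.exists_assocPair
  obtain ⟨rfl, -⟩ := hassoc.unique hu hassoc₀
  have hshape := (hCshape.resolve_left fun h => h.1.not_condC2 hu hC2).2
  have hCU : ∀ T ∈ C, T ⊆ U := fun T hT => (hCblocks T hT).2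
  obtain ⟨E₁, E₂, hE, hE₁, hE₂, hD₁, hD₂⟩ := hA.exists_dlev_eq_union hB hCU hl
  have hFblocks := hA.forall_mem_add_add hB hCblocks
  have hrange := hA.pairRangeOn hB hCU hl hCrange
  have hcount := three_mul_card_sub_eq hFblocks hCblocks hrange hCrange hE hE₁ hE₂ hD₁ hD₂
  rw [card_univ, Fintype.card_fin, hCcard, hUcard] at hcount
  obtain ⟨hcount, hassocF⟩ := hassoc.of_three_mul_sub_eq hv hcount
  have hnodup : (A + B + C).Nodup := by
    rw [Multiset.Nodup.add_iff (hAsimple.add_iff hBsimple |>.mpr hAB)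
      (hCbal.nodup hCblocks (by rwa [hCcard, hUcard])), Multiset.disjoint_add_left]
    exact ⟨hAC, hBC⟩
  have hv2 : v % 2 = 0 := by have := hC2.1; omega
  subst hv
  exact ⟨⟨⟨by simp, rfl, hFblocks⟩, threeBalancedOn_of_nodup hnodup, l, m - n + d, hl, hassocF,
    hrange, Or.inr ⟨hassocF.condC2 hv2 hodd, hshape.extend (subset_univ U) hE hE₁ hE₂ hD₁ hD₂⟩⟩,
    hcount⟩

/-- filling an NGDD and a GDD with an NWBTS (Lemma tee11). -/
theorem stmt_10 (v m n u c l : ℕ) (d : ℤ)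
    (hm : m % 3 = 0) (hn : n % 3 = 0) (hu : u % 6 = 2 ∨ u % 6 = 4)
    (hv : v = 2 * m + 2 * n + u)
    (hc : c < u.choose 3) (hC2 : CondC2 u c) (hassoc : AssocPair u c l d)
    (U : Finset (Fin v)) (G : Fin (m + n) → Finset (Fin v))
    (A B C : Multiset (Finset (Fin v)))
    (hAsimple : A.Nodup) (hA : IsNGDD Finset.univ m n u G U A)
    (hBsimple : B.Nodup) (hB : IsGDD1u Finset.univ (l - 1) u U B)
    (hC : IsNWBTSOn U u c C)
    (hAB : Disjoint A B) (hAC : Disjoint A C)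
    (hBC : Disjoint B C) :
    IsNWBTSOn Finset.univ v (Multiset.card (A + B + C)) (A + B + C) ∧
    3 * (Multiset.card (A + B + C) : ℤ) =
      (l : ℤ) * (v.choose 2 : ℤ) + m - n + d :=
  stmt_10_general v m n u c l d hv hc hC2 hassoc U G A B C hAsimple hA hBsimple hB hC hAB hAC hBC

end DataPlacement
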